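/- Roe property of the Roe-average matrix for the one-dimensional Euler equations: fix γ > 1 and let (ρ_l, v_l, p_l) and (ρ_r, v_r, p_r) be primitive states with positive densities and pressures, with conserved vectors U_l, U_r, Euler fluxes F(U_l), F(U_r) and specific enthalpies H_l = (E_l + p_l)/ρ_l, H_r = (E_r + p_r)/ρ_r. Define the Roe averages v̂ = (√ρ_l·v_l + √ρ_r·v_r)/(√ρ_l + √ρ_r) and Ĥ = (√ρ_l·H_l + √ρ_r·H_r)/(√ρ_l + √ρ_r), and let A(v̂, Ĥ) be the 3×3 matrix with rows (0, 1, 0), (½(γ−3)v̂², (3−γ)v̂, γ−1), (½(γ−1)v̂³ − v̂Ĥ, Ĥ − (γ−1)v̂², γv̂). Then F(U_r) − F(U_l) = A(v̂, Ĥ)·(U_r − U_l). -/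

import Mathlib

/-!
With `a = √ρ_l`, `b = √ρ_r`, the Roe average of a quantity `f` is the mean of `f` weighted by
`a, b`, and it satisfies the discrete product rule
`Δ(ρ f g) = f̂ Δ(ρ g) + ĝ Δ(ρ f) - f̂ ĝ Δρ` (clear the denominator `(a + b)²`).
Writing `p = (γ - 1) q`, every component of `ΔF` and of `A ΔU` is a combination of
`Δρ, Δ(ρv), Δ(ρv²), Δ(ρH), Δ(ρHv)`, and the Roe property reduces to the product rule for
`(f, g) = (v, v)` and `(f, g) = (H, v)`.
-/

noncomputable section

/-- Conserved vector `U = (ρ, ρv, E)` of a primitive state `(ρ, v, p)`,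
with `E = p/(γ-1) + ρ v²/2`. -/
def consU (γ ρ v p : ℝ) : Fin 3 → ℝ := ![ρ, ρ * v, p / (γ - 1) + ρ * v ^ 2 / 2]

/-- Euler flux `F(U) = (ρv, p + ρv², (E+p)v)`. -/
def eulerFlux (γ ρ v p : ℝ) : Fin 3 → ℝ :=
  ![ρ * v, p + ρ * v ^ 2, (p / (γ - 1) + ρ * v ^ 2 / 2 + p) * v]

/-- Jacobian of the one-dimensional Euler flux expressed through the velocity `v`
and specific enthalpy `H`. -/
def eulerJacobian (γ v H : ℝ) : Matrix (Fin 3) (Fin 3) ℝ :=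
  !![0, 1, 0;
     (γ - 3) / 2 * v ^ 2, (3 - γ) * v, γ - 1;
     (γ - 1) / 2 * v ^ 3 - v * H, H - (γ - 1) * v ^ 2, γ * v]

def roeAverage (ρl ρr fl fr : ℝ) : ℝ :=
  (Real.sqrt ρl * fl + Real.sqrt ρr * fr) / (Real.sqrt ρl + Real.sqrt ρr)

theorem roeAverage_product_rule {ρl ρr : ℝ} (hρl : 0 ≤ ρl) (hρr : 0 ≤ ρr) (hρ : 0 < ρl + ρr)
    (fl fr gl gr : ℝ) :
    ρr * fr * gr - ρl * fl * gl =
      roeAverage ρl ρr fl fr * (ρr * gr - ρl * gl) + roeAverage ρl ρr gl gr * (ρr * fr - ρl * fl)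
        - roeAverage ρl ρr fl fr * roeAverage ρl ρr gl gr * (ρr - ρl) := by
  have hsqrt : Real.sqrt ρl + Real.sqrt ρr ≠ 0 := by
    rcases lt_or_ge 0 ρl with h | h
    · exact (add_pos_of_pos_of_nonneg (Real.sqrt_pos.2 h) (Real.sqrt_nonneg _)).ne'
    · exact (add_pos_of_nonneg_of_pos (Real.sqrt_nonneg _) (Real.sqrt_pos.2 (by linarith))).ne'
  unfold roeAverage
  set a := Real.sqrt ρl
  set b := Real.sqrt ρr
  rw [(Real.sq_sqrt hρl).symm, (Real.sq_sqrt hρr).symm]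
  field_simp
  ring

theorem eulerFlux_sub_eq_eulerJacobian_mulVec {γ : ℝ} (hγ : γ ≠ 1)
    {ρl vl pl Hl ρr vr pr Hr v H : ℝ}
    (hHl : ρl * Hl = pl / (γ - 1) + ρl * vl ^ 2 / 2 + pl)
    (hHr : ρr * Hr = pr / (γ - 1) + ρr * vr ^ 2 / 2 + pr)
    (hvv : ρr * vr * vr - ρl * vl * vl =
      v * (ρr * vr - ρl * vl) + v * (ρr * vr - ρl * vl) - v * v * (ρr - ρl))
    (hHv : ρr * Hr * vr - ρl * Hl * vl =
      H * (ρr * vr - ρl * vl) + v * (ρr * Hr - ρl * Hl) - H * v * (ρr - ρl)) :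
    eulerFlux γ ρr vr pr - eulerFlux γ ρl vl pl =
      (eulerJacobian γ v H).mulVec (consU γ ρr vr pr - consU γ ρl vl pl) := by
  have hγ' : γ - 1 ≠ 0 := sub_ne_zero.mpr hγ
  obtain ⟨ql, rfl⟩ : ∃ q, pl = (γ - 1) * q := ⟨pl / (γ - 1), by field_simp⟩
  obtain ⟨qr, rfl⟩ : ∃ q, pr = (γ - 1) * q := ⟨pr / (γ - 1), by field_simp⟩
  simp only [mul_div_cancel_left₀ _ hγ'] at hHl hHr
  ext i
  fin_cases i <;>
    simp only [eulerFlux, eulerJacobian, consU, mul_div_cancel_left₀ _ hγ', Pi.sub_apply,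
      Matrix.mulVec, dotProduct, Fin.sum_univ_three, Matrix.of_apply, Matrix.cons_val',
      Matrix.cons_val_fin_one, Matrix.cons_val, Matrix.cons_val_zero, Matrix.cons_val_one,
      Fin.zero_eta, Fin.mk_one, Fin.reduceFinMk, Fin.isValue]
  · ring
  · linear_combination (3 - γ) / 2 * hvv
  · linear_combination (v - vr) * hHr + (vl - v) * hHl + (1 - γ) / 2 * v * hvv + hHv

theorem roe_average_matrix_property_general
    (γ : ℝ) (hγ : 1 < γ)
    (ρl vl pl ρr vr pr : ℝ)
    (hρl : 0 < ρl) (hρr : 0 < ρr)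
    (Hl Hr vhat Hhat : ℝ)
    (hHl : Hl = (pl / (γ - 1) + ρl * vl ^ 2 / 2 + pl) / ρl)
    (hHr : Hr = (pr / (γ - 1) + ρr * vr ^ 2 / 2 + pr) / ρr)
    (hvhat : vhat = (Real.sqrt ρl * vl + Real.sqrt ρr * vr) / (Real.sqrt ρl + Real.sqrt ρr))
    (hHhat : Hhat = (Real.sqrt ρl * Hl + Real.sqrt ρr * Hr) / (Real.sqrt ρl + Real.sqrt ρr)) :
    eulerFlux γ ρr vr pr - eulerFlux γ ρl vl pl =
      (eulerJacobian γ vhat Hhat).mulVec (consU γ ρr vr pr - consU γ ρl vl pl) := by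
  have hρ : 0 < ρl + ρr := add_pos hρl hρr
  have hρHl : ρl * Hl = pl / (γ - 1) + ρl * vl ^ 2 / 2 + pl := by
    rw [hHl, mul_div_cancel₀ _ hρl.ne']
  have hρHr : ρr * Hr = pr / (γ - 1) + ρr * vr ^ 2 / 2 + pr := by
    rw [hHr, mul_div_cancel₀ _ hρr.ne']
  subst hvhat hHhat
  exact eulerFlux_sub_eq_eulerJacobian_mulVec hγ.ne' hρHl hρHr
    (roeAverage_product_rule hρl.le hρr.le hρ vl vr vl vr)
    (roeAverage_product_rule hρl.le hρr.le hρ Hl Hr vl vr)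

/-- Roe property of the Roe-average matrix for the 1-D Euler equations:
`F(U_r) − F(U_l) = A(v̂, Ĥ)·(U_r − U_l)` where `v̂, Ĥ` are the Roe averages. -/
theorem roe_average_matrix_property
    (γ : ℝ) (hγ : 1 < γ)
    (ρl vl pl ρr vr pr : ℝ)
    (hρl : 0 < ρl) (hpl : 0 < pl) (hρr : 0 < ρr) (hpr : 0 < pr)
    (Hl Hr vhat Hhat : ℝ)
    (hHl : Hl = (pl / (γ - 1) + ρl * vl ^ 2 / 2 + pl) / ρl)
    (hHr : Hr = (pr / (γ - 1) + ρr * vr ^ 2 / 2 + pr) / ρr)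
    (hvhat : vhat = (Real.sqrt ρl * vl + Real.sqrt ρr * vr) / (Real.sqrt ρl + Real.sqrt ρr))
    (hHhat : Hhat = (Real.sqrt ρl * Hl + Real.sqrt ρr * Hr) / (Real.sqrt ρl + Real.sqrt ρr)) :
    eulerFlux γ ρr vr pr - eulerFlux γ ρl vl pl =
      (eulerJacobian γ vhat Hhat).mulVec (consU γ ρr vr pr - consU γ ρl vl pl) :=
  roe_average_matrix_property_general γ hγ ρl vl pl ρr vr pr hρl hρr Hl Hr vhat Hhat hHl hHr hvhat
    hHhat
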